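/- Let Δ be a divergence, ρ ∈ [0,∞], X a type, and μ₁, μ₂ ∈ PMF(X). Then Δ̄²_X(μ₁‖μ₂) ≤ ρ holds if and only if for every probabilistic decision rule γ : X → PMF({Acc, Rej}), the point (Pr[γ(μ₁) = Rej], Pr[γ(μ₂) = Acc]) lies in the privacy region R^Δ(ρ). -/

import Mathlib

open scoped ENNReal

/-- A divergence: a family of functions `PMF X × PMF X → [0,∞]`, one for each type `X`. -/
def Divergence : Type 1 := ∀ X : Type, PMF X → PMF X → ℝ≥0∞

/-- The cut of a divergence `Δ` with respect to a set `W`: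
the supremum over probabilistic postprocessings into `W`. -/
noncomputable def cut (Δ : Divergence) (W : Type) : Divergence :=
  fun X μ₁ μ₂ => ⨆ γ : X → PMF W, Δ W (μ₁.bind γ) (μ₂.bind γ)

/-- The data-processing inequality for a divergence. -/
def DPI (Δ : Divergence) : Prop :=
  ∀ (X Y : Type) (γ : X → PMF Y) (μ₁ μ₂ : PMF X),
    Δ Y (μ₁.bind γ) (μ₂.bind γ) ≤ Δ X μ₁ μ₂

/-- A divergence is `k`-generated if some `k`-cut of it equals the divergence itself. -/
def kGenerated (Δ : Divergence) (k : ℕ) : Prop :=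
  ∃ W : Type, Nonempty (W ≃ Fin k) ∧ cut Δ W = Δ

/-- A two-element set of decisions. -/
inductive Decision : Type
  | Acc : Decision
  | Rej : Decision

/-- The distribution `(1−x)·δ_Acc + x·δ_Rej` on decisions, for `x ≤ 1`. -/
noncomputable def mix (x : ℝ≥0∞) (h : x ≤ 1) : PMF Decision :=
  (PMF.ofFintype (fun b => cond b x (1 - x)) (by simp [h])).map (fun b => if b then Decision.Rej else Decision.Acc)

/-- The privacy region `R^Δ(ρ)` of a divergence `Δ`: all pairs `(x,y) ∈ [0,1]²` such
that the `2`-cut of `Δ` between `(1−x)·δ_Acc + x·δ_Rej` and `y·δ_Acc + (1−y)·δ_Rej`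
is at most `ρ`. -/
noncomputable def region (Δ : Divergence) (ρ : ℝ≥0∞) : Set (ℝ≥0∞ × ℝ≥0∞) :=
  {p | ∃ (h1 : p.1 ≤ 1) (_ : p.2 ≤ 1),
    cut Δ Decision Decision (mix p.1 h1) (mix (1 - p.2) tsub_le_self) ≤ ρ}

/-! Composing a rule `X → PMF W` with a post-processing `W → PMF W` gives again a rule
`X → PMF W`, so the `W`-cut satisfies the data-processing inequality and dominates `Δ` on `W`;
hence `cut Δ W X μ₁ μ₂ ≤ ρ` exactly when `cut Δ W W (γ μ₁) (γ μ₂) ≤ ρ` for every `γ`. For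
`W = Decision` the latter is the region condition, because every distribution on decisions is
the `mix` of its rejection probability. -/

section Cut

variable (Δ : Divergence) (W : Type)

theorem cut_le_iff {X : Type} {μ₁ μ₂ : PMF X} {ρ : ℝ≥0∞} :
    cut Δ W X μ₁ μ₂ ≤ ρ ↔ ∀ γ : X → PMF W, Δ W (μ₁.bind γ) (μ₂.bind γ) ≤ ρ :=
  iSup_le_iff

theorem le_cut {X : Type} (μ₁ μ₂ : PMF X) (γ : X → PMF W) :
    Δ W (μ₁.bind γ) (μ₂.bind γ) ≤ cut Δ W X μ₁ μ₂ :=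
  le_iSup (fun γ : X → PMF W => Δ W (μ₁.bind γ) (μ₂.bind γ)) γ

theorem le_cut_self (ν₁ ν₂ : PMF W) : Δ W ν₁ ν₂ ≤ cut Δ W W ν₁ ν₂ := by
  simpa only [PMF.bind_pure] using le_cut Δ W ν₁ ν₂ PMF.pure

theorem dpi_cut : DPI (cut Δ W) := by
  intro X Y γ μ₁ μ₂
  refine (cut_le_iff Δ W).2 fun γ' => ?_
  simpa only [PMF.bind_bind] using le_cut Δ W μ₁ μ₂ fun x => (γ x).bind γ'

theorem cut_le_iff_forall_cut_bind_le {X : Type} {μ₁ μ₂ : PMF X} {ρ : ℝ≥0∞} :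
    cut Δ W X μ₁ μ₂ ≤ ρ ↔ ∀ γ : X → PMF W, cut Δ W W (μ₁.bind γ) (μ₂.bind γ) ≤ ρ :=
  ⟨fun h γ => (dpi_cut Δ W X W γ μ₁ μ₂).trans h,
    fun h => (cut_le_iff Δ W).2 fun γ => (le_cut_self Δ W _ _).trans (h γ)⟩

end Cut

namespace Decision

theorem apply_acc_add_apply_rej (p : PMF Decision) : p Acc + p Rej = 1 := by
  classical
  rw [← p.tsum_coe, tsum_eq_sum (s := {Acc, Rej}) (by rintro (_ | _) h <;> simp at h)]
  simp

theorem apply_acc_eq_one_sub_apply_rej (p : PMF Decision) : p Acc = 1 - p Rej :=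
  (ENNReal.sub_eq_of_eq_add_rev (p.apply_ne_top Rej) (by rw [add_comm, apply_acc_add_apply_rej])).symm

theorem apply_rej_eq_one_sub_apply_acc (p : PMF Decision) : p Rej = 1 - p Acc :=
  (ENNReal.sub_eq_of_eq_add_rev (p.apply_ne_top Acc) (apply_acc_add_apply_rej p).symm).symm

end Decision

open Decision

theorem mix_apply_rej (x : ℝ≥0∞) (h : x ≤ 1) : mix x h Rej = x := by
  simp [mix, PMF.map_apply]

theorem mix_apply_acc (x : ℝ≥0∞) (h : x ≤ 1) : mix x h Acc = 1 - x := by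
  simp [mix, PMF.map_apply]

theorem mix_eq_of_apply_rej {p : PMF Decision} {x : ℝ≥0∞} (h : x ≤ 1) (hp : p Rej = x) :
    mix x h = p := by
  ext (_ | _)
  · rw [mix_apply_acc, apply_acc_eq_one_sub_apply_rej, hp]
  · rw [mix_apply_rej, hp]

theorem apply_rej_apply_acc_mem_region_iff (Δ : Divergence) (ρ : ℝ≥0∞) (ν₁ ν₂ : PMF Decision) :
    (ν₁ Rej, ν₂ Acc) ∈ region Δ ρ ↔ cut Δ Decision Decision ν₁ ν₂ ≤ ρ := by
  have hν₂ := apply_rej_eq_one_sub_apply_acc ν₂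
  constructor
  · rintro ⟨h₁, -, h⟩
    rwa [mix_eq_of_apply_rej h₁ rfl, mix_eq_of_apply_rej _ hν₂] at h
  · intro h
    refine ⟨ν₁.coe_le_one Rej, ν₂.coe_le_one Acc, ?_⟩
    rwa [mix_eq_of_apply_rej _ rfl, mix_eq_of_apply_rej _ hν₂]

/-- Hypothesis testing characterization of the `2`-cut of an arbitrary divergence:
`Δ̄²_X(μ₁‖μ₂) ≤ ρ` iff every probabilistic decision rule yields error rates inside the
privacy region `R^Δ(ρ)`. -/
theorem two_cut_le_iff_region (Δ : Divergence) (ρ : ℝ≥0∞) (X : Type)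
    (μ₁ μ₂ : PMF X) :
    cut Δ Decision X μ₁ μ₂ ≤ ρ ↔
      ∀ γ : X → PMF Decision,
        ((μ₁.bind γ) Decision.Rej, (μ₂.bind γ) Decision.Acc) ∈ region Δ ρ := by
  simp only [apply_rej_apply_acc_mem_region_iff]
  exact cut_le_iff_forall_cut_bind_le Δ Decision
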